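/- arXiv:2006.13987 — 2 statements merged into one kernel-verified Lean document; each statement's English description precedes it below -/
import Mathlib

section
/- Let q_F ∈ (0,1), q_S = 1 − q_F, and μ_F, μ_S > 0 with μ_F·q_F + μ_S·q_S = 1, let 0 ≤ λ < 1, and set p_F = μ_F·q_F. Then for all P₁, P₂ ∈ [0,1], the arrival rate to a tagged busy slow server, λ_BS = (λ/q_S)·P₁·P₂·(1−p_F), satisfies λ_BS ≤ λ·μ_S < μ_S. -/
/-- Slow-server half of Theorem 1: with `p_F = μF·qF`, the arrival rate to a
tagged busy slow server satisfies `λ_BS ≤ λ·μS < μS`. -/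
theorem stmt_1 (qF qS μF μS lam pF : ℝ)
    (hqF0 : 0 < qF) (hqF1 : qF < 1) (hqS : qS = 1 - qF)
    (hμF : 0 < μF) (hμS : 0 < μS) (hcap : μF * qF + μS * qS = 1)
    (hlam0 : 0 ≤ lam) (hlam1 : lam < 1)
    (hpF : pF = μF * qF) :
    ∀ P1 P2 : ℝ, 0 ≤ P1 → P1 ≤ 1 → 0 ≤ P2 → P2 ≤ 1 →
      (lam / qS) * P1 * P2 * (1 - pF) ≤ lam * μS ∧
      lam * μS < μS := by
  intro P1 P2 h1 h1' h2 h2'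
  have hqSpos : 0 < qS := by rw [hqS]; linarith
  have hkey : 1 - pF = μS * qS := by rw [hpF]; linarith
  constructor
  · rw [hkey]
    have : (lam / qS) * P1 * P2 * (μS * qS) = lam * μS * (P1 * P2) := by
      field_simp
    rw [this]
    have hP12 : P1 * P2 ≤ 1 := by nlinarith
    nlinarith [mul_nonneg hlam0 hμS.le, mul_nonneg h1 h2]
  · nlinarith
end

section
/- Let λ be real, q_F, q_S nonzero reals, d_F, d_S ≥ 1 natural numbers, and π_F, π_S, p_F, p_S reals. Define λ_IF = (λ·d_F/q_F)·Σ_{i=0}^{d_F−1} C(d_F−1,i)·π_F^i·(1−π_F)^{d_F−1−i}/(i+1); λ_BF = (λ·d_F/q_F)·((1−π_F)^{d_F−1}/d_F)·((1−(1−π_S)^{d_S})·(1−p_S) + (1−π_S)^{d_S}·p_F); λ_IS = (λ·d_S/q_S)·(1−π_F)^{d_F}·Σ_{i=0}^{d_S−1} C(d_S−1,i)·π_S^i·(1−π_S)^{d_S−1−i}·p_S/(i+1); and λ_BS = (λ·d_S/q_S)·(1−π_F)^{d_F}·((1−π_S)^{d_S−1}/d_S)·(1−p_F). Then q_F·(π_F·λ_IF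 + (1−π_F)·λ_BF) + q_S·(π_S·λ_IS + (1−π_S)·λ_BS) = λ. -/
/-!
Each of the four terms is a flow that can be summed in closed form. The only non-trivial sum is
`d x ∑_{i<d} C(d-1,i) xⁱ (1-x)^(d-1-i) / (i+1) = 1 - (1-x)^d`, which follows from
`d C(d-1,i) / (i+1) = C(d,i+1)` and the binomial theorem: the idle fast servers receive
`λ(1 - (1-π_F)^{d_F})`, the busy fast ones `λ(1-π_F)^{d_F}` times the probability of dispatching
to a fast server when all sampled fast servers are busy, and the slow servers the complement of that.
-/

open Finset

theorem Nat.cast_choose_mul_add_one_div {K : Type*} [Field K] [CharZero K] (e i : ℕ) :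
    (e.choose i : K) * (e + 1) / (i + 1) = (e + 1).choose (i + 1) := by
  rw [div_eq_iff (Nat.cast_add_one_ne_zero i)]
  exact_mod_cast (mul_comm _ _).trans (Nat.add_one_mul_choose_eq e i)

theorem mul_sum_choose_mul_pow_div_add_one {K : Type*} [Field K] [CharZero K]
    (d : ℕ) (hd : d ≠ 0) (x y : K) :
    d * x * ∑ i ∈ range d, ((d - 1).choose i : K) * x ^ i * y ^ (d - 1 - i) / (i + 1)
      = (x + y) ^ d - y ^ d := by
  obtain ⟨e, rfl⟩ := Nat.exists_eq_add_one_of_ne_zero hd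
  rw [add_pow, sum_range_succ' _ (e + 1), Nat.add_sub_cancel, mul_sum]
  simp only [pow_zero, one_mul, Nat.choose_zero_right, Nat.cast_one, mul_one, Nat.sub_zero]
  rw [add_sub_cancel_right]
  refine sum_congr rfl fun i _ => ?_
  rw [← Nat.cast_choose_mul_add_one_div, Nat.add_sub_add_right]
  push_cast
  ring

theorem mul_sum_binomial_div_add_one {K : Type*} [Field K] [CharZero K]
    (d : ℕ) (hd : d ≠ 0) (x : K) :
    d * x * ∑ i ∈ range d, ((d - 1).choose i : K) * x ^ i * (1 - x) ^ (d - 1 - i) / (i + 1)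
      = 1 - (1 - x) ^ d := by
  rw [mul_sum_choose_mul_pow_div_add_one d hd, add_sub_cancel, one_pow]

/-- Total flow conservation for the mean-field arrival rates (4)–(7) of
JIQ-(d_F,d_S): `q_F·(π_F·λ_IF + (1−π_F)·λ_BF) + q_S·(π_S·λ_IS + (1−π_S)·λ_BS) = λ`. -/
theorem stmt_17 (lam qF qS : ℝ) (hqF : qF ≠ 0) (hqS : qS ≠ 0)
    (dF dS : ℕ) (hdF : 1 ≤ dF) (hdS : 1 ≤ dS)
    (πF πS pF pS : ℝ)
    (lamIF lamBF lamIS lamBS : ℝ)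
    (hIF : lamIF = (lam * (dF : ℝ) / qF) *
        ∑ i ∈ Finset.range dF,
          ((dF - 1).choose i : ℝ) * πF ^ i * (1 - πF) ^ (dF - 1 - i) / ((i : ℝ) + 1))
    (hBF : lamBF = (lam * (dF : ℝ) / qF) * ((1 - πF) ^ (dF - 1) / (dF : ℝ)) *
        ((1 - (1 - πS) ^ dS) * (1 - pS) + (1 - πS) ^ dS * pF))
    (hIS : lamIS = (lam * (dS : ℝ) / qS) * (1 - πF) ^ dF *
        ∑ i ∈ Finset.range dS,
          ((dS - 1).choose i : ℝ) * πS ^ i * (1 - πS) ^ (dS - 1 - i) * pS / ((i : ℝ) + 1))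
    (hBS : lamBS = (lam * (dS : ℝ) / qS) * (1 - πF) ^ dF *
        ((1 - πS) ^ (dS - 1) / (dS : ℝ)) * (1 - pF)) :
    qF * (πF * lamIF + (1 - πF) * lamBF) + qS * (πS * lamIS + (1 - πS) * lamBS)
      = lam := by
  have hdF₀ : dF ≠ 0 := by omega
  have hdS₀ : dS ≠ 0 := by omega
  have idleF : qF * (πF * lamIF) = lam * (1 - (1 - πF) ^ dF) := by
    rw [hIF, ← mul_sum_binomial_div_add_one dF hdF₀]
    field_simp
  have busyF : qF * ((1 - πF) * lamBF) = lam * (1 - πF) ^ dF *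
      ((1 - (1 - πS) ^ dS) * (1 - pS) + (1 - πS) ^ dS * pF) := by
    rw [hBF, ← pow_sub_one_mul hdF₀]
    field_simp
  have idleS : qS * (πS * lamIS) = lam * (1 - πF) ^ dF * pS * (1 - (1 - πS) ^ dS) := by
    simp_rw [hIS, mul_div_right_comm _ pS, ← sum_mul, ← mul_sum_binomial_div_add_one dS hdS₀]
    field_simp
  have busyS : qS * ((1 - πS) * lamBS) = lam * (1 - πF) ^ dF * (1 - πS) ^ dS * (1 - pF) := by
    rw [hBS, ← pow_sub_one_mul hdS₀ (1 - πS)]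
    field_simp
  linear_combination idleF + busyF + idleS + busyS
end
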